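/- arXiv:1504.00746 — 6 statements merged into one kernel-verified Lean document; each statement's English description precedes it below -/
import Mathlib

section
/- Let p = 2, N odd, r ≥ 2. The restriction of η_r to Φ_r² ∩ Γ⁰(2) is still surjective onto Γ/Γ_r, where Γ⁰(2) is the set of matrices in SL₂(ℤ) whose upper-right entry is even. -/
/-! Choose the lower-right entry `δ` first: as `N` is prime to `2^r` and `d ≡ 1 (mod 4)`, the
Chinese remainder theorem gives `δ ≡ 1 (mod 4N)` with `δ ≡ d (mod 4·2^r)`. Such a `δ` is prime
to `4 N 2^r`, so it completes to a matrix of determinant one with lower-left entry `N 2^r` and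
upper-right entry divisible by `4`; the upper-left entry is then inverse to `δ` modulo `4N`,
hence `≡ 1 (mod 4N)`. -/

theorem Int.exists_modEq_one_and_modEq {k m n d : ℤ} (hmn : IsCoprime m n)
    (hd : d ≡ 1 [ZMOD k]) : ∃ δ, δ ≡ 1 [ZMOD k * m] ∧ δ ≡ d [ZMOD k * n] := by
  obtain ⟨u, hu⟩ := hd.symm.dvd
  obtain ⟨a, b, hab⟩ := hmn
  refine ⟨1 + k * m * (a * u), (Int.modEq_iff_dvd.mpr ⟨a * u, by ring⟩).symm,
    (Int.modEq_iff_dvd.mpr ⟨-(u * b), ?_⟩).symm⟩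
  linear_combination -hu + k * u * hab

theorem Int.isCoprime_of_modEq_one {δ m : ℤ} (h : δ ≡ 1 [ZMOD m]) : IsCoprime δ m := by
  obtain ⟨t, ht⟩ := h.symm.dvd
  exact ⟨1, -t, by linear_combination ht⟩

theorem Matrix.SpecialLinearGroup.exists_of_isCoprime {c e δ : ℤ} (h : IsCoprime δ (e * c)) :
    ∃ A : SpecialLinearGroup (Fin 2) ℤ,
      A 1 0 = c ∧ A 1 1 = δ ∧ e ∣ A 0 1 ∧ A 0 0 * δ ≡ 1 [ZMOD e * c] := by
  obtain ⟨u, v, huv⟩ := h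
  refine ⟨⟨!![u, -(e * v); c, δ], ?_⟩, rfl, rfl, ⟨-v, by simp⟩,
    (Int.modEq_iff_dvd.mpr ⟨-v, ?_⟩).symm⟩
  · rw [Matrix.det_fin_two_of]
    linear_combination huv
  · simp only [Matrix.of_apply, Matrix.cons_val', Matrix.cons_val_zero,
      Matrix.empty_val', Matrix.cons_val_fin_one]
    linear_combination huv

theorem stmt1_general (N : ℕ) (hNodd : Odd N) (r : ℕ)
    (d : ℤ) (hd : d ≡ 1 [ZMOD 4]) :
    ∃ A : Matrix.SpecialLinearGroup (Fin 2) ℤ,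
      ((N : ℤ) * 2 ^ r ∣ A.1 1 0) ∧
      A.1 0 0 ≡ 1 [ZMOD 4 * N] ∧
      A.1 1 1 ≡ 1 [ZMOD 4 * N] ∧
      (2 : ℤ) ∣ A.1 0 1 ∧
      A.1 1 1 ≡ d [ZMOD 2 ^ r] := by
  have hN2 : IsCoprime (N : ℤ) (2 ^ r) :=
    (Int.isCoprime_two_right.mpr (by simpa using hNodd)).pow_right
  obtain ⟨δ, hδN, hδ2⟩ := Int.exists_modEq_one_and_modEq hN2 hd
  have hδ : IsCoprime δ (4 * N) := Int.isCoprime_of_modEq_one hδN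
  have hδ2r : IsCoprime δ (2 ^ r) :=
    (hδ.of_isCoprime_of_dvd_right (dvd_mul_of_dvd_left (by norm_num) _)).pow_right
  obtain ⟨A, hc, hδA, hb, ha⟩ := Matrix.SpecialLinearGroup.exists_of_isCoprime
    (e := 4) (c := N * 2 ^ r) (by rw [← mul_assoc]; exact hδ.mul_right hδ2r)
  have ha' : A 0 0 * δ ≡ 1 [ZMOD 4 * N] :=
    ha.of_dvd (by rw [← mul_assoc]; exact dvd_mul_right _ _)
  refine ⟨A, hc ▸ dvd_rfl, ?_, hδA ▸ hδN, (by norm_num : (2 : ℤ) ∣ 4).trans hb,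
    hδA ▸ hδ2.of_dvd (dvd_mul_left _ _)⟩
  calc A 0 0 = A 0 0 * 1 := (mul_one _).symm
    _ ≡ A 0 0 * δ [ZMOD 4 * N] := hδN.symm.mul_left _
    _ ≡ 1 [ZMOD 4 * N] := ha'

theorem stmt1 (N : ℕ) (hN : 0 < N) (hNodd : Odd N) (r : ℕ) (hr : 2 ≤ r)
    (d : ℤ) (hd : d ≡ 1 [ZMOD 4]) :
    ∃ A : Matrix.SpecialLinearGroup (Fin 2) ℤ,
      ((N : ℤ) * 2 ^ r ∣ A.1 1 0) ∧
      A.1 0 0 ≡ 1 [ZMOD 4 * N] ∧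
      A.1 1 1 ≡ 1 [ZMOD 4 * N] ∧
      (2 : ℤ) ∣ A.1 0 1 ∧
      A.1 1 1 ≡ d [ZMOD 2 ^ r] :=
  stmt1_general N hNodd r d hd
end

section
/- Let p = 2, N odd, and r ≥ s ≥ 2. Then Γ₁(N·2^r) is a normal subgroup of Φ_r^s := Γ₁(N·2^s) ∩ Γ₀(2^r), and the quotient Φ_r^s / Γ₁(N·2^r) is isomorphic to Γ_s/Γ_r ≅ ℤ/2^{r-s}ℤ via the map induced by sending a matrix to the class of its (2,2)-entry. -/
/-!
The bottom-right entry `d` is a homomorphism from `Φ = Γ₁(N·2^s) ∩ Γ₀(2^r)` to `(ℤ/2^r)ˣ`.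
As `N` is prime to `2`, `Γ₁(N·2^r) = Γ₁(N) ∩ Γ₁(2^r)`, and inside `Γ₀(2^r)` the condition
`d ≡ 1` already cuts out `Γ₁(2^r)`; so the kernel is `Γ₁(N·2^r)`. The image is the kernel of
reduction `(ℤ/2^r)ˣ → (ℤ/2^s)ˣ`: by the Chinese remainder theorem an admissible `d` can be chosen
`≡ 1 mod N`, and then `(N·2^r, d)` is the bottom row of a matrix in `SL₂(ℤ)`. That kernel has
order `2^(r-s)` and contains `1 + 2^s`, whose order is `2^(r-s)` because `s ≥ 2`; so it is cyclic.
-/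

open scoped MatrixGroups

namespace ZMod

variable {m n : ℕ}

theorem intCast_mul_eq_intCast_iff (h : m.Coprime n) (x y : ℤ) :
    (x : ZMod (m * n)) = y ↔ (x : ZMod m) = y ∧ (x : ZMod n) = y := by
  rw [← (chineseRemainder h).injective.eq_iff, map_intCast, map_intCast]
  exact Prod.ext_iff

theorem exists_intCast_eq_and_intCast_eq (h : m.Coprime n) (a : ZMod m) (b : ZMod n) :
    ∃ d : ℤ, (d : ZMod m) = a ∧ (d : ZMod n) = b := by
  obtain ⟨d, hd⟩ := intCast_surjective ((chineseRemainder h).symm (a, b))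
  have hcrt := congrArg (chineseRemainder h) hd
  rw [map_intCast, RingEquiv.apply_symm_apply] at hcrt
  exact ⟨d, Prod.ext_iff.mp hcrt⟩

theorem intCast_eq_one_of_dvd (h : n ∣ m) {x : ℤ} (hx : (x : ZMod m) = 1) :
    (x : ZMod n) = 1 := by
  rw [← map_intCast (castHom h (ZMod n)), hx, map_one]

theorem intCast_eq_zero_of_dvd (h : n ∣ m) {x : ℤ} (hx : (x : ZMod m) = 0) :
    (x : ZMod n) = 0 := by
  rw [← map_intCast (castHom h (ZMod n)), hx, map_zero]

theorem card_ker_unitsMap_mul_totient [NeZero m] (h : n ∣ m) :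
    Nat.card (unitsMap h).ker * n.totient = m.totient := by
  have : NeZero n := ⟨fun hn ↦ NeZero.ne m (Nat.eq_zero_of_zero_dvd (hn ▸ h))⟩
  rw [← card_units_eq_totient, ← card_units_eq_totient, ← Nat.card_eq_fintype_card,
    ← Nat.card_eq_fintype_card, ← (unitsMap h).ker.card_mul_index, Subgroup.index_ker,
    MonoidHom.range_eq_top.mpr (unitsMap_surjective h), Subgroup.card_top]

section PrimePow

variable {p : ℕ} (hp : p.Prime) {r s : ℕ}
include hp

theorem card_ker_unitsMap_prime_pow (hs : s ≠ 0) (hsr : s ≤ r) :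
    Nat.card (unitsMap (pow_dvd_pow p hsr)).ker = p ^ (r - s) := by
  have : NeZero p := ⟨hp.ne_zero⟩
  have key := card_ker_unitsMap_mul_totient (pow_dvd_pow p hsr)
  rw [Nat.totient_prime_pow hp (by omega), Nat.totient_prime_pow hp (by omega),
    show r - 1 = r - s + (s - 1) by omega, pow_add, mul_assoc] at key
  exact Nat.eq_of_mul_eq_mul_right
    (Nat.mul_pos (pow_pos hp.pos _) (Nat.sub_pos_of_lt hp.one_lt)) key

theorem isCyclic_ker_unitsMap_prime_pow (hs : s ≠ 0) (hps : s + 2 ≤ p * s) (hsr : s ≤ r) :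
    IsCyclic (unitsMap (pow_dvd_pow p hsr)).ker := by
  have : NeZero p := ⟨hp.ne_zero⟩
  obtain ⟨k, rfl⟩ : ∃ k, r = k + s := ⟨r - s, by omega⟩
  have hord := orderOf_one_add_mul_prime_pow hp s hs hps 1 (mod_cast hp.not_dvd_one) k
  rw [Int.cast_one, mul_one] at hord
  have hunit : IsUnit (1 + p ^ s : ZMod (p ^ (k + s))) :=
    (orderOf_pos_iff.mp (hord ▸ pow_pos hp.pos k)).isUnit
  have hmem : hunit.unit ∈ (unitsMap (pow_dvd_pow p hsr)).ker := by
    rw [MonoidHom.mem_ker, Units.ext_iff, unitsMap_val, IsUnit.unit_spec]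
    show castHom (pow_dvd_pow p hsr) (ZMod (p ^ s)) (1 + p ^ s) = 1
    rw [map_add, map_one, map_pow, map_natCast, ← Nat.cast_pow, natCast_self, add_zero]
  refine isCyclic_of_orderOf_eq_card
    (⟨hunit.unit, hmem⟩ : (unitsMap (pow_dvd_pow p hsr)).ker) ?_
  rw [Subgroup.orderOf_mk, ← orderOf_units, IsUnit.unit_spec, hord,
    card_ker_unitsMap_prime_pow hp hs hsr, Nat.add_sub_cancel]

end PrimePow

end ZMod

namespace CongruenceSubgroup

variable {m k n : ℕ}

theorem mem_Gamma1_iff {A : SL(2, ℤ)} :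
    A ∈ Gamma1 n ↔ A ∈ Gamma0 n ∧ (A 1 1 : ZMod n) = 1 := by
  refine ⟨fun hA ↦ ⟨Gamma1_in_Gamma0 n hA, ((Gamma1_mem n A).mp hA).2.1⟩, fun ⟨h0, h1⟩ ↦ ?_⟩
  obtain ⟨ha, hd, hc⟩ := (Gamma1_to_Gamma0_mem ⟨A, h0⟩).mp h1
  exact (Gamma1_mem n A).mpr ⟨ha, hd, hc⟩

theorem Gamma0_le_of_dvd (h : m ∣ n) : Gamma0 n ≤ Gamma0 m := fun _ hA ↦
  Gamma0_mem.mpr (ZMod.intCast_eq_zero_of_dvd h (Gamma0_mem.mp hA))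

theorem Gamma1_le_of_dvd (h : m ∣ n) : Gamma1 n ≤ Gamma1 m := fun A hA ↦ by
  obtain ⟨ha, hd, hc⟩ := (Gamma1_mem n A).mp hA
  exact (Gamma1_mem m A).mpr ⟨ZMod.intCast_eq_one_of_dvd h ha, ZMod.intCast_eq_one_of_dvd h hd,
    ZMod.intCast_eq_zero_of_dvd h hc⟩

theorem Gamma1_mul_of_coprime (h : m.Coprime n) : Gamma1 (m * n) = Gamma1 m ⊓ Gamma1 n := by
  ext A
  simp only [Subgroup.mem_inf, Gamma1_mem, ← Int.cast_one (R := ZMod _),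
    ← Int.cast_zero (R := ZMod _), ZMod.intCast_mul_eq_intCast_iff h]
  tauto

theorem Gamma1_mul_le_inf (hkn : k ∣ n) : Gamma1 (m * n) ≤ Gamma1 (m * k) ⊓ Gamma0 n :=
  le_inf (Gamma1_le_of_dvd (mul_dvd_mul_left m hkn))
    ((Gamma1_in_Gamma0 _).trans (Gamma0_le_of_dvd (dvd_mul_left n m)))

variable (m k n)

/-- The paper's `Φ_r^s` is the domain with `m = N`, `k = 2^s`, `n = 2^r`. -/
def bottomRightUnits : ↥(Gamma1 (m * k) ⊓ Gamma0 n) →* (ZMod n)ˣ :=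
  ((Gamma0Map n).comp (Subgroup.inclusion inf_le_right)).toHomUnits

theorem coe_bottomRightUnits (A : ↥(Gamma1 (m * k) ⊓ Gamma0 n)) :
    (bottomRightUnits m k n A : ZMod n) = ((A : SL(2, ℤ)) 1 1 : ZMod n) :=
  rfl

variable {m k n}

theorem ker_bottomRightUnits (hmn : m.Coprime n) :
    (bottomRightUnits m k n).ker = (Gamma1 (m * n)).subgroupOf (Gamma1 (m * k) ⊓ Gamma0 n) := by
  ext ⟨A, hA⟩
  obtain ⟨hA1, hA0⟩ := Subgroup.mem_inf.mp hA
  have hAm : A ∈ Gamma1 m := Gamma1_le_of_dvd (dvd_mul_right m k) hA1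
  rw [MonoidHom.mem_ker, Units.ext_iff, coe_bottomRightUnits, Subgroup.mem_subgroupOf,
    Gamma1_mul_of_coprime hmn, Subgroup.mem_inf, mem_Gamma1_iff (n := n)]
  simp only [Units.val_one, hAm, hA0, true_and]

theorem range_bottomRightUnits (hmn : m.Coprime n) (hkn : k ∣ n) :
    (bottomRightUnits m k n).range = (ZMod.unitsMap hkn).ker := by
  apply le_antisymm
  · rintro _ ⟨⟨A, hA1, -⟩, rfl⟩
    rw [MonoidHom.mem_ker, Units.ext_iff, ZMod.unitsMap_val, coe_bottomRightUnits]
    show ZMod.castHom hkn (ZMod k) (A 1 1 : ZMod n) = 1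
    rw [map_intCast]
    exact (mem_Gamma1_iff.mp (Gamma1_le_of_dvd (dvd_mul_left k m) hA1)).2
  · intro u hu
    obtain ⟨d, hdm, hdn⟩ := ZMod.exists_intCast_eq_and_intCast_eq hmn 1 (u : ZMod n)
    have hdk : (d : ZMod k) = 1 := by
      rw [← map_intCast (ZMod.castHom hkn (ZMod k)), hdn]
      exact Units.ext_iff.mp hu
    have hcop : IsCoprime ((m * n : ℕ) : ℤ) d := by
      rw [Nat.cast_mul]
      exact ((ZMod.coe_int_isUnit_iff_isCoprime d m).mp (hdm ▸ isUnit_one)).mul_left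
        ((ZMod.coe_int_isUnit_iff_isCoprime d n).mp (hdn ▸ u.isUnit))
    obtain ⟨A, -, hA⟩ := ModularGroup.bottom_row_surj (R := ℤ)
      (show ![((m * n : ℕ) : ℤ), d] ∈ {cd | IsCoprime (cd 0) (cd 1)} from hcop)
    have hc : A 1 0 = ((m * n : ℕ) : ℤ) := congrFun hA 0
    have hd : A 1 1 = d := congrFun hA 1
    have hA0 : A ∈ Gamma0 (m * n) := by
      rw [Gamma0_mem, hc, Int.cast_natCast, ZMod.natCast_self]
    have hA1 : A ∈ Gamma1 (m * k) := by
      rw [Gamma1_mul_of_coprime (hmn.coprime_dvd_right hkn), Subgroup.mem_inf, mem_Gamma1_iff,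
        mem_Gamma1_iff, hd]
      exact ⟨⟨Gamma0_le_of_dvd (dvd_mul_right m n) hA0, hdm⟩,
        ⟨Gamma0_le_of_dvd (hkn.mul_left m) hA0, hdk⟩⟩
    refine ⟨⟨A, hA1, Gamma0_le_of_dvd (dvd_mul_left n m) hA0⟩, Units.ext ?_⟩
    rw [coe_bottomRightUnits]
    exact (congrArg Int.cast hd).trans hdn

end CongruenceSubgroup

open CongruenceSubgroup

theorem stmt2_general (N : ℕ) (hNodd : Odd N) (r s : ℕ) (hs : 2 ≤ s) (hsr : s ≤ r) :
    Gamma1 (N * 2 ^ r) ≤ Gamma1 (N * 2 ^ s) ⊓ Gamma0 (2 ^ r) ∧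
    ((Gamma1 (N * 2 ^ r)).subgroupOf (Gamma1 (N * 2 ^ s) ⊓ Gamma0 (2 ^ r))).Normal ∧
    ∀ [inst : ((Gamma1 (N * 2 ^ r)).subgroupOf (Gamma1 (N * 2 ^ s) ⊓ Gamma0 (2 ^ r))).Normal],
    ∃ φ : (↥(Gamma1 (N * 2 ^ s) ⊓ Gamma0 (2 ^ r)) ⧸
        ((Gamma1 (N * 2 ^ r)).subgroupOf (Gamma1 (N * 2 ^ s) ⊓ Gamma0 (2 ^ r)))) ≃*
          Multiplicative (ZMod (2 ^ (r - s))),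
      ∀ A B : ↥(Gamma1 (N * 2 ^ s) ⊓ Gamma0 (2 ^ r)),
        φ (QuotientGroup.mk A) = φ (QuotientGroup.mk B) ↔
          ((A : Matrix.SpecialLinearGroup (Fin 2) ℤ).1 1 1 : ℤ) ≡
            ((B : Matrix.SpecialLinearGroup (Fin 2) ℤ).1 1 1 : ℤ) [ZMOD 2 ^ r] := by
  have hcop : N.Coprime (2 ^ r) := (Nat.coprime_two_right.mpr hNodd).pow_right r
  have hdvd : 2 ^ s ∣ 2 ^ r := pow_dvd_pow 2 hsr
  have hker := ker_bottomRightUnits (k := 2 ^ s) hcop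
  refine ⟨Gamma1_mul_le_inf hdvd, hker ▸ (bottomRightUnits _ _ _).normal_ker, fun {_} ↦ ?_⟩
  have hcyc := ZMod.isCyclic_ker_unitsMap_prime_pow Nat.prime_two (by omega) (by omega) hsr
  have hcard := ZMod.card_ker_unitsMap_prime_pow Nat.prime_two (by omega) hsr
  let quotientEquivKer := (QuotientGroup.quotientMulEquivOfEq hker.symm).trans
    ((QuotientGroup.quotientKerEquivRange _).trans
      (MulEquiv.subgroupCongr (range_bottomRightUnits hcop hdvd)))
  refine ⟨quotientEquivKer.trans (hcard ▸ (zmodCyclicMulEquiv hcyc).symm), fun A B ↦ ?_⟩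
  rw [EmbeddingLike.apply_eq_iff_eq, QuotientGroup.eq, ← hker, MonoidHom.mem_ker, map_mul,
    map_inv, inv_mul_eq_one, Units.ext_iff, coe_bottomRightUnits, coe_bottomRightUnits,
    ZMod.intCast_eq_intCast_iff, Nat.cast_pow, Nat.cast_ofNat]

theorem stmt2 (N : ℕ) (hN : 0 < N) (hNodd : Odd N) (r s : ℕ) (hs : 2 ≤ s) (hsr : s ≤ r) :
    Gamma1 (N * 2 ^ r) ≤ Gamma1 (N * 2 ^ s) ⊓ Gamma0 (2 ^ r) ∧
    ((Gamma1 (N * 2 ^ r)).subgroupOf (Gamma1 (N * 2 ^ s) ⊓ Gamma0 (2 ^ r))).Normal ∧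
    ∀ [inst : ((Gamma1 (N * 2 ^ r)).subgroupOf (Gamma1 (N * 2 ^ s) ⊓ Gamma0 (2 ^ r))).Normal],
    ∃ φ : (↥(Gamma1 (N * 2 ^ s) ⊓ Gamma0 (2 ^ r)) ⧸
        ((Gamma1 (N * 2 ^ r)).subgroupOf (Gamma1 (N * 2 ^ s) ⊓ Gamma0 (2 ^ r)))) ≃*
          Multiplicative (ZMod (2 ^ (r - s))),
      ∀ A B : ↥(Gamma1 (N * 2 ^ s) ⊓ Gamma0 (2 ^ r)),
        φ (QuotientGroup.mk A) = φ (QuotientGroup.mk B) ↔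
          ((A : Matrix.SpecialLinearGroup (Fin 2) ℤ).1 1 1 : ℤ) ≡
            ((B : Matrix.SpecialLinearGroup (Fin 2) ℤ).1 1 1 : ℤ) [ZMOD 2 ^ r] :=
  stmt2_general N hNodd r s hs hsr
end

section
/- Let p = 2, N odd, r ≥ s ≥ 2, t = diag(1,2). Then t⁻¹ Φ_r^s t ∩ Φ_r^s = Φ_r^s ∩ Γ⁰(2), and Φ_r^s ∩ t Φ_r^s t⁻¹ = Φ_{r+1}^s, where intersections are taken inside GL₂(ℚ). -/
/-!
Conjugation by `t = diag(1, p)` fixes the diagonal, multiplies the upper right entry by `p` and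
divides the lower left entry by `p`, while membership in `Γ₁(n) ∩ Γ₀(m)` only constrains the
diagonal and the lower left entry. So `t⁻¹ A t` is integral exactly when `p` divides the upper
right entry of `A`, and `t⁻¹ Φ t ∩ Φ = Φ ∩ Γ⁰(p)`. Dually, `t A t⁻¹` for `A ∈ Φ_r^s` has lower left
entry divisible by `p^(r+1)`; conversely, if `c` is the lower left entry of `B ∈ Φ_{r+1}^s`, then
`c / p` is divisible by `p^r` and, as `N` is prime to `p`, by `N`, hence by `N p^s` since `s ≤ r`.
-/

open Matrix CongruenceSubgroup MatrixGroups

section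

local notation "ι" => fun A : SL(2, ℤ) ↦ Matrix.map (Subtype.val A) (Int.cast : ℤ → ℚ)

lemma SL2_det_expl {R : Type*} [CommRing R] (A : SL(2, R)) :
    A 0 0 * A 1 1 - A 0 1 * A 1 0 = 1 :=
  det_fin_two (A : Matrix (Fin 2) (Fin 2) R) ▸ A.det_coe

lemma mem_Gamma1_inf_Gamma0_iff {n m : ℕ} {A : SL(2, ℤ)} :
    A ∈ Gamma1 n ⊓ Gamma0 m ↔
      (n : ℤ) ∣ A 0 0 - 1 ∧ (n : ℤ) ∣ A 1 1 - 1 ∧ (n : ℤ) ∣ A 1 0 ∧ (m : ℤ) ∣ A 1 0 := by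
  simp only [Subgroup.mem_inf, Gamma1_mem, Gamma0_mem, ← ZMod.intCast_zmod_eq_zero_iff_dvd,
    Int.cast_sub, Int.cast_one, sub_eq_zero, and_assoc]

lemma diag_inv_mul_mul_diag {p : ℚ} (hp : p ≠ 0) (M : Matrix (Fin 2) (Fin 2) ℚ) :
    !![1, 0; 0, p]⁻¹ * M * !![1, 0; 0, p] = !![M 0 0, p * M 0 1; M 1 0 / p, M 1 1] := by
  have hinv : (!![1, 0; 0, p])⁻¹ = !![1, 0; 0, p⁻¹] :=
    inv_eq_right_inv (by simp [hp, Matrix.one_fin_two])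
  rw [hinv, Matrix.eta_fin_two M, Matrix.mul_fin_two, Matrix.mul_fin_two]
  simp [div_eq_inv_mul, mul_comm, hp]

lemma eq_conj_iff_inv_conj_eq {n K : Type*} [Fintype n] [DecidableEq n] [Field K]
    {t X Y : Matrix n n K} (ht : IsUnit t.det) : Y = t * X * t⁻¹ ↔ X = t⁻¹ * Y * t := by
  constructor <;> rintro rfl <;>
    simp [Matrix.mul_assoc, Matrix.nonsing_inv_mul_cancel_left (h := ht),
      Matrix.mul_nonsing_inv_cancel_left (h := ht), Matrix.nonsing_inv_mul_cancel_right (h := ht),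
      Matrix.mul_nonsing_inv_cancel_right (h := ht)]

lemma map_intCast_eq_diag_inv_mul_mul_diag_iff {p : ℕ} (hp : p ≠ 0)
    (A B : Matrix (Fin 2) (Fin 2) ℤ) :
    B.map (Int.cast : ℤ → ℚ) = !![1, 0; 0, (p : ℚ)]⁻¹ * A.map Int.cast * !![1, 0; 0, (p : ℚ)] ↔
      B 0 0 = A 0 0 ∧ B 0 1 = p * A 0 1 ∧ p * B 1 0 = A 1 0 ∧ B 1 1 = A 1 1 := by
  have hp' : (p : ℚ) ≠ 0 := by exact_mod_cast hp
  rw [diag_inv_mul_mul_diag hp', ← Matrix.ext_iff]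
  simp only [map_apply, of_apply, cons_val', cons_val_fin_one, Fin.forall_fin_two, cons_val_zero,
    cons_val_one, Int.cast_inj, eq_div_iff hp', mul_comm (B 1 0 : ℚ)]
  norm_cast
  exact and_assoc

theorem inv_diag_conj_Gamma1_inf_Gamma0_inter_eq {p : ℕ} (hp : p ≠ 0) (n m : ℕ) :
    {M | ∃ A ∈ Gamma1 n ⊓ Gamma0 m,
        M = !![1, 0; 0, (p : ℚ)]⁻¹ * ι A * !![1, 0; 0, (p : ℚ)]} ∩
        (ι '' {A | A ∈ Gamma1 n ⊓ Gamma0 m}) =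
      ι '' {A | A ∈ Gamma1 n ⊓ Gamma0 m ∧ (p : ℤ) ∣ A.1 0 1} := by
  ext M
  simp only [Set.mem_inter_iff, Set.mem_ofPred_eq, Set.mem_image]
  constructor
  · rintro ⟨⟨A, -, rfl⟩, B, hB, hBA⟩
    have hb := ((map_intCast_eq_diag_inv_mul_mul_diag_iff hp _ _).1 hBA).2.1
    exact ⟨B, ⟨hB, A 0 1, hb⟩, hBA⟩
  · rintro ⟨B, ⟨hB, b, hb⟩, rfl⟩
    have hdet : B 0 0 * B 1 1 - b * (p * B 1 0) = 1 := by
      linear_combination SL2_det_expl B + B 1 0 * hb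
    let A : SL(2, ℤ) := ⟨!![B 0 0, b; p * B 1 0, B 1 1], by rwa [det_fin_two_of]⟩
    obtain ⟨h00, h11, hn10, hm10⟩ := mem_Gamma1_inf_Gamma0_iff.1 hB
    refine ⟨⟨A, ?_, ?_⟩, B, hB, rfl⟩
    · exact mem_Gamma1_inf_Gamma0_iff.2
        ⟨h00, h11, hn10.mul_left _, hm10.mul_left _⟩
    · exact (map_intCast_eq_diag_inv_mul_mul_diag_iff hp _ _).2 ⟨rfl, hb, rfl, rfl⟩

theorem Gamma1_inf_Gamma0_inter_diag_conj_eq {p N : ℕ} (hp : p ≠ 0) (hN : N.Coprime p) {r s : ℕ}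
    (hsr : s ≤ r) :
    (ι '' {A | A ∈ Gamma1 (N * p ^ s) ⊓ Gamma0 (p ^ r)}) ∩
        {M | ∃ A ∈ Gamma1 (N * p ^ s) ⊓ Gamma0 (p ^ r),
          M = !![1, 0; 0, (p : ℚ)] * ι A * !![1, 0; 0, (p : ℚ)]⁻¹} =
      ι '' {A | A ∈ Gamma1 (N * p ^ s) ⊓ Gamma0 (p ^ (r + 1))} := by
  have hp' : (p : ℤ) ≠ 0 := by exact_mod_cast hp
  have ht : IsUnit (!![1, 0; 0, (p : ℚ)]).det := by simp [hp]
  ext M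
  simp only [Set.mem_inter_iff, Set.mem_ofPred_eq, Set.mem_image]
  constructor
  · rintro ⟨⟨B, hB, rfl⟩, A, hA, hBA⟩
    rw [eq_conj_iff_inv_conj_eq ht, map_intCast_eq_diag_inv_mul_mul_diag_iff hp] at hBA
    refine ⟨B, ?_, rfl⟩
    obtain ⟨h00, h11, hn10, -⟩ := mem_Gamma1_inf_Gamma0_iff.1 hB
    refine mem_Gamma1_inf_Gamma0_iff.2 ⟨h00, h11, hn10, ?_⟩
    rw [← hBA.2.2.1, Nat.cast_pow, pow_succ']
    exact mul_dvd_mul_left _ (by exact_mod_cast (mem_Gamma1_inf_Gamma0_iff.1 hA).2.2.2)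
  · rintro ⟨B, hB, rfl⟩
    obtain ⟨h00, h11, hn10, hr10⟩ := mem_Gamma1_inf_Gamma0_iff.1 hB
    push_cast at hn10 hr10
    obtain ⟨k, hk⟩ : (p : ℤ) ∣ B 1 0 := (dvd_pow_self _ r.succ_ne_zero).trans hr10
    have hrk : (p : ℤ) ^ r ∣ k := by
      rwa [hk, pow_succ', mul_dvd_mul_iff_left hp'] at hr10
    have hNk : (N : ℤ) * p ^ s ∣ k := by
      have hcop : IsCoprime (N : ℤ) p := Nat.isCoprime_iff_coprime.2 hN
      have : (N : ℤ) ∣ k := hcop.dvd_of_dvd_mul_left (hk ▸ (dvd_mul_right _ _).trans hn10)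
      exact (mul_dvd_mul_left _ (pow_dvd_pow _ hsr)).trans (hcop.pow_right.mul_dvd this hrk)
    have hdet : B 0 0 * B 1 1 - p * B 0 1 * k = 1 := by
      linear_combination SL2_det_expl B + B 0 1 * hk
    let A : SL(2, ℤ) := ⟨!![B 0 0, p * B 0 1; k, B 1 1], by rwa [det_fin_two_of]⟩
    refine ⟨⟨B, ?_, rfl⟩, A, ?_, ?_⟩
    · refine mem_Gamma1_inf_Gamma0_iff.2 ⟨h00, h11, by exact_mod_cast hn10, ?_⟩
      exact_mod_cast (pow_dvd_pow _ r.le_succ).trans hr10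
    · exact mem_Gamma1_inf_Gamma0_iff.2
        ⟨h00, h11, by exact_mod_cast hNk, by exact_mod_cast hrk⟩
    · rw [eq_conj_iff_inv_conj_eq ht, map_intCast_eq_diag_inv_mul_mul_diag_iff hp]
      exact ⟨rfl, rfl, hk.symm, rfl⟩

end

theorem stmt6_general (N : ℕ) (hNodd : Odd N) (r s : ℕ) (hsr : s ≤ r) :
    let ι : Matrix.SpecialLinearGroup (Fin 2) ℤ → Matrix (Fin 2) (Fin 2) ℚ :=
      fun A => A.1.map (Int.cast : ℤ → ℚ)
    let t : Matrix (Fin 2) (Fin 2) ℚ := !![1, 0; 0, 2]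
    ({M | ∃ A ∈ Gamma1 (N * 2 ^ s) ⊓ Gamma0 (2 ^ r), M = t⁻¹ * ι A * t} ∩
        (ι '' {A | A ∈ Gamma1 (N * 2 ^ s) ⊓ Gamma0 (2 ^ r)})
      = ι '' {A | A ∈ Gamma1 (N * 2 ^ s) ⊓ Gamma0 (2 ^ r) ∧ (2 : ℤ) ∣ A.1 0 1}) ∧
    ((ι '' {A | A ∈ Gamma1 (N * 2 ^ s) ⊓ Gamma0 (2 ^ r)}) ∩
        {M | ∃ A ∈ Gamma1 (N * 2 ^ s) ⊓ Gamma0 (2 ^ r), M = t * ι A * t⁻¹}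
      = ι '' {A | A ∈ Gamma1 (N * 2 ^ s) ⊓ Gamma0 (2 ^ (r + 1))}) := by
  have h2 : (2 : ℕ) ≠ 0 := two_ne_zero
  have hN : N.Coprime 2 := Nat.coprime_two_right.2 hNodd
  simpa only [Nat.cast_ofNat] using
    And.intro (inv_diag_conj_Gamma1_inf_Gamma0_inter_eq h2 (N * 2 ^ s) (2 ^ r))
      (Gamma1_inf_Gamma0_inter_diag_conj_eq h2 hN hsr)

theorem stmt6 (N : ℕ) (hN : 0 < N) (hNodd : Odd N) (r s : ℕ) (hs : 2 ≤ s) (hsr : s ≤ r) :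
    let ι : Matrix.SpecialLinearGroup (Fin 2) ℤ → Matrix (Fin 2) (Fin 2) ℚ :=
      fun A => A.1.map (Int.cast : ℤ → ℚ)
    let t : Matrix (Fin 2) (Fin 2) ℚ := !![1, 0; 0, 2]
    ({M | ∃ A ∈ Gamma1 (N * 2 ^ s) ⊓ Gamma0 (2 ^ r), M = t⁻¹ * ι A * t} ∩
        (ι '' {A | A ∈ Gamma1 (N * 2 ^ s) ⊓ Gamma0 (2 ^ r)})
      = ι '' {A | A ∈ Gamma1 (N * 2 ^ s) ⊓ Gamma0 (2 ^ r) ∧ (2 : ℤ) ∣ A.1 0 1}) ∧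
    ((ι '' {A | A ∈ Gamma1 (N * 2 ^ s) ⊓ Gamma0 (2 ^ r)}) ∩
        {M | ∃ A ∈ Gamma1 (N * 2 ^ s) ⊓ Gamma0 (2 ^ r), M = t * ι A * t⁻¹}
      = ι '' {A | A ∈ Gamma1 (N * 2 ^ s) ⊓ Gamma0 (2 ^ (r + 1))}) :=
  stmt6_general N hNodd r s hsr
end

section
/- Let p = 2, N odd, r ≥ s ≥ 2. The matrices α_i = (1 i; 0 1) for i = 0, 1 form a complete set of left coset representatives for the subgroup Φ_r^s ∩ Γ⁰(2) in Φ_r^s; in particular [Φ_r^s : Φ_r^s ∩ Γ⁰(2)] = 2. -/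
/-!
The coset representatives are the powers `T ^ i`, which lie in `Γ₁(M) ∩ Γ₀(M')` for all `M, M'`;
so `α_i⁻¹ A` stays in `Φ_r^s` and only the parity of its upper-right entry `b - i d` matters.
Since `d ≡ 1 mod 2^s`, `d` is odd, and exactly one `i ∈ {0, 1}` makes `b - i d` even.
-/

open Matrix CongruenceSubgroup ModularGroup MatrixGroups

lemma ModularGroup.T_zpow_mem_Gamma1 (N : ℕ) (n : ℤ) : T ^ n ∈ Gamma1 N := by
  simp [Gamma1_mem, coe_T_zpow]

lemma ModularGroup.T_zpow_inv_mul_apply_zero_one (n : ℤ) (g : SL(2, ℤ)) :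
    ((T ^ n)⁻¹ * g) 0 1 = g 0 1 - n * g 1 1 := by
  simp [coe_T_zpow, Matrix.mul_apply, Fin.sum_univ_two, sub_eq_add_neg]

lemma CongruenceSubgroup.odd_apply_one_one_of_mem_Gamma1 {N : ℕ} (hN : 2 ∣ N) {g : SL(2, ℤ)}
    (hg : g ∈ Gamma1 N) : Odd (g 1 1) := by
  have h := congrArg (ZMod.castHom hN (ZMod 2)) ((Gamma1_mem N g).mp hg).2.1
  rwa [map_intCast, map_one, ZMod.intCast_eq_one_iff_odd] at h

lemma Int.existsUnique_fin_two_two_dvd_sub_mul {d : ℤ} (hd : Odd d) (b : ℤ) :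
    ∃! i : Fin 2, 2 ∣ b - i * d := by
  obtain ⟨t, rfl⟩ := hd
  rcases Int.even_or_odd b with ⟨m, rfl⟩ | ⟨m, rfl⟩
  · refine ⟨0, ⟨m, by simp [two_mul]⟩, ?_⟩
    rintro j ⟨k, hk⟩
    fin_cases j <;> simp_all; omega
  · refine ⟨1, ⟨m - t, by push_cast [Fin.val_one]; ring⟩, ?_⟩
    rintro j ⟨k, hk⟩
    fin_cases j <;> simp_all; omega

theorem stmt7 (N : ℕ) (r s : ℕ) (hs : 2 ≤ s) :
    let α : Fin 2 → Matrix.SpecialLinearGroup (Fin 2) ℤ :=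
      fun i => ⟨!![1, (i : ℤ); 0, 1], by simp [Matrix.det_fin_two_of]⟩
    ∀ A ∈ Gamma1 (N * 2 ^ s) ⊓ Gamma0 (2 ^ r),
      ∃! i : Fin 2, (α i)⁻¹ * A ∈ Gamma1 (N * 2 ^ s) ⊓ Gamma0 (2 ^ r) ∧
        (2 : ℤ) ∣ ((α i)⁻¹ * A).1 0 1 := by
  intro α A hA
  have hα : ∀ i, α i = T ^ (i : ℤ) := fun i => Subtype.ext (coe_T_zpow _).symm
  have hαmem : ∀ i, α i ∈ Gamma1 (N * 2 ^ s) ⊓ Gamma0 (2 ^ r) := fun i =>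
    hα i ▸ ⟨T_zpow_mem_Gamma1 _ _, Gamma1_in_Gamma0 _ (T_zpow_mem_Gamma1 _ _)⟩
  have hd : Odd (A 1 1) := odd_apply_one_one_of_mem_Gamma1
    (dvd_mul_of_dvd_right (dvd_pow_self 2 (by omega : s ≠ 0)) N) hA.1
  refine (existsUnique_congr fun i => ?_).mpr (Int.existsUnique_fin_two_two_dvd_sub_mul hd (A 0 1))
  rw [and_iff_right (mul_mem (inv_mem (hαmem i)) hA), hα, T_zpow_inv_mul_apply_zero_one]
end

section
/- Let R be a commutative ring, G a finite group, and M a left R[G]-module which is reflexive as an R-module (the natural map M → Hom_R(Hom_R(M,R), R) is an isomorphism). Then M is reflexive as an R[G]-module: the natural map M → Hom_{R[G]}(Hom_{R[G]}(M, R[G]), R[G]) is an isomorphism. -/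
/-!
Write `ε : R[G] → R` for the coefficient at `1`. Since `a.coeff σ = ε (σ⁻¹ a) = ε (a σ⁻¹)`, an
`R[G]`-linear map `f : M → R[G]` is determined by `ε ∘ f`, and `g ↦ (m ↦ ∑ σ, g (σ⁻¹ m) σ)`
inverts `f ↦ ε ∘ f`: so `Hom_{R[G]}(M, R[G]) ≅ Hom_R(M, R)`. By the same identity a right
`R[G]`-linear map `Φ` into `R[G]` is determined by `ε ∘ Φ`, so precomposing with this isomorphism
embeds the `R[G]`-double dual into the `R`-double dual, and the embedding carries the `R[G]`-evaluation
map to the `R`-evaluation map. Bijectivity of the latter then forces bijectivity of the former.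
-/

open Module MulOpposite

noncomputable section

namespace MonoidAlgebra

variable {R G : Type*} [CommSemiring R]

variable (R) in
def lcoeff (g : G) : R[G] →ₗ[R] R where
  toFun a := a.coeff g
  map_add' _ _ := rfl
  map_smul' _ _ := rfl

variable [Group G]

lemma coeff_one_single_inv_mul (a : R[G]) (g : G) :
    (single g⁻¹ (1 : R) * a).coeff 1 = a.coeff g := by
  rw [coeff_single_mul_apply, inv_inv, mul_one, one_mul]

lemma coeff_one_mul_single_inv (a : R[G]) (g : G) :
    (a * single g⁻¹ (1 : R)).coeff 1 = a.coeff g := by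
  rw [coeff_mul_single_apply, inv_inv, one_mul, mul_one]

lemma coeff_linearMap_apply {N : Type*} [AddCommMonoid N] [Module R[G] N] (f : N →ₗ[R[G]] R[G])
    (n : N) (g : G) : (f n).coeff g = (f (single g⁻¹ (1 : R) • n)).coeff 1 := by
  rw [map_smul, smul_eq_mul, coeff_one_single_inv_mul]

lemma coeff_opLinearMap_apply {N : Type*} [AddCommMonoid N] [Module R[G]ᵐᵒᵖ N]
    (Φ : N →ₗ[R[G]ᵐᵒᵖ] R[G]) (n : N) (g : G) :
    (Φ n).coeff g = (Φ (op (single g⁻¹ (1 : R)) • n)).coeff 1 := by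
  rw [map_smul, smul_eq_mul_unop, unop_op, coeff_one_mul_single_inv]

lemma opLinearMap_ext_coeff_one {N : Type*} [AddCommMonoid N] [Module R[G]ᵐᵒᵖ N]
    {Φ Ψ : N →ₗ[R[G]ᵐᵒᵖ] R[G]} (h : ∀ n, (Φ n).coeff 1 = (Ψ n).coeff 1) : Φ = Ψ :=
  LinearMap.ext fun n => MonoidAlgebra.ext <| Finsupp.ext fun g => by
    rw [coeff_opLinearMap_apply, coeff_opLinearMap_apply Ψ, h]

variable [Fintype G] {M : Type*} [AddCommMonoid M] [Module R M] [Module R[G] M]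
  [IsScalarTower R R[G] M]

variable (G) in
def liftDual (g : Dual R M) : M →ₗ[R[G]] R[G] where
  toFun m := ∑ σ : G, single σ (g (single σ⁻¹ (1 : R) • m))
  map_add' m m' := by simp [Finset.sum_add_distrib]
  map_smul' s m := by
    induction s using MonoidAlgebra.induction_on with
    | of τ =>
      simp only [of_apply, RingHom.id_apply, smul_eq_mul, Finset.mul_sum]
      refine (Fintype.sum_equiv (Equiv.mulLeft τ) _ _ fun σ => ?_).symm
      rw [single_mul_single, one_mul, Equiv.coe_mulLeft, smul_smul, single_mul_single, mul_one,
        mul_inv_rev, inv_mul_cancel_right]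
    | add s t hs ht =>
      simp only [add_smul, smul_add, map_add, single_add, Finset.sum_add_distrib, hs, ht]
    | smul r s hs =>
      simp only [smul_assoc, smul_comm _ r, map_smul, RingHom.id_apply, ← smul_single,
        ← Finset.smul_sum, hs]

lemma coeff_liftDual_apply (g : Dual R M) (m : M) (σ : G) :
    (liftDual G g m).coeff σ = g (single σ⁻¹ (1 : R) • m) := by
  classical
  simp [liftDual, coeff_sum, Finset.sum_apply', coeff_single, Finsupp.single_apply]

lemma coeff_one_liftDual_apply (g : Dual R M) (m : M) : (liftDual G g m).coeff 1 = g m := by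
  rw [coeff_liftDual_apply, inv_one, ← one_def, one_smul]

variable (R G M) in
def dualEquiv : Dual R M ≃ₗ[R] (M →ₗ[R[G]] R[G]) where
  toFun := liftDual G
  invFun f := lcoeff R 1 ∘ₗ f.restrictScalars R
  map_add' g g' := LinearMap.ext fun m => MonoidAlgebra.ext <| Finsupp.ext fun σ => by
    simp [coeff_liftDual_apply]
  map_smul' r g := LinearMap.ext fun m => MonoidAlgebra.ext <| Finsupp.ext fun σ => by
    simp [coeff_liftDual_apply]
  left_inv g := LinearMap.ext fun m => coeff_one_liftDual_apply g m
  right_inv f := LinearMap.ext fun m => MonoidAlgebra.ext <| Finsupp.ext fun σ =>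
    (coeff_liftDual_apply _ m σ).trans (coeff_linearMap_apply f m σ).symm

def dualEval (x : M) : (M →ₗ[R[G]] R[G]) →ₗ[R[G]ᵐᵒᵖ] R[G] :=
  ⟨⟨fun f => f x, fun _ _ => rfl⟩, fun _ _ => rfl⟩

variable (R G M) in
def restrictDoubleDual (Φ : (M →ₗ[R[G]] R[G]) →ₗ[R[G]ᵐᵒᵖ] R[G]) : Dual R (Dual R M) :=
  lcoeff R 1 ∘ₗ Φ.restrictScalars R ∘ₗ (dualEquiv R G M).toLinearMap

lemma restrictDoubleDual_injective : Function.Injective (restrictDoubleDual R G M) := by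
  intro Φ Ψ h
  refine opLinearMap_ext_coeff_one fun f => ?_
  obtain ⟨g, rfl⟩ := (dualEquiv R G M).surjective f
  exact LinearMap.congr_fun h g

lemma restrictDoubleDual_dualEval (x : M) :
    restrictDoubleDual R G M (dualEval x) = Dual.eval R M x :=
  LinearMap.ext fun g => coeff_one_liftDual_apply g x

variable (R G M) in
theorem bijective_dualEval [IsReflexive R M] :
    Function.Bijective (dualEval : M → (M →ₗ[R[G]] R[G]) →ₗ[R[G]ᵐᵒᵖ] R[G]) := by
  refine ⟨fun x y hxy => (bijective_dual_eval R M).injective ?_, fun Φ => ?_⟩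
  · rw [← restrictDoubleDual_dualEval (G := G), ← restrictDoubleDual_dualEval (G := G), hxy]
  · obtain ⟨x, hx⟩ := (bijective_dual_eval R M).surjective (restrictDoubleDual R G M Φ)
    exact ⟨x, restrictDoubleDual_injective (hx ▸ restrictDoubleDual_dualEval x)⟩

end MonoidAlgebra

end

theorem stmt16 (R : Type) [CommRing R] (G : Type) [Group G] [Fintype G]
    (M : Type) [AddCommGroup M] [Module R M] [Module (MonoidAlgebra R G) M]
    [IsScalarTower R (MonoidAlgebra R G) M]
    [Module.IsReflexive R M] :
    Function.Bijective
      (fun x : M =>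
        (⟨⟨fun f : M →ₗ[MonoidAlgebra R G] MonoidAlgebra R G => f x,
            fun _ _ => rfl⟩, fun _ _ => rfl⟩ :
          (M →ₗ[MonoidAlgebra R G] MonoidAlgebra R G) →ₗ[(MonoidAlgebra R G)ᵐᵒᵖ]
            MonoidAlgebra R G)) :=
  MonoidAlgebra.bijective_dualEval R G M
end

section
/- Let Λ = ℤ_p[[Γ]] with Γ ≅ ℤ_p, and let W be a compact Λ-module such that W = lim←_r W/𝔞_r W where 𝔞_r is the r-th augmentation ideal. Then there is a canonical isomorphism Hom_Λ(W, Λ) ≅ lim←_r Hom_{Λ_r}(W/𝔞_r W, Λ_r), where Λ_r = Λ/𝔞_r. -/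
/-!
Since `Hom_Λ(W/𝔞_r W, Λ_r) = Hom_Λ(W, Λ_r)` and `Hom_Λ(W, -)` commutes with inverse limits,
everything reduces to `Λ = lim← Λ/(ω_k)` for `ω_k = (1+T)^{p^k} - 1`. As
`ω_{k+1} = ω_k · ∑_{i<p} (1+T)^{i p^k}` and the second factor has constant term `p`, we get
`ω_{k+j} = ω_k · c` with `c ∈ (p, T)^j`. So an element divisible by every `ω_k` lies in every
`(p, T)^N` and vanishes, and for a compatible family `(f_k)` the telescoping series
`f_k + ∑_{j ≥ k} (f_{j+1} - f_j)` converges coefficientwise in `ℤ_p`, with `ω_k` factoring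
out of its tail.
-/

/-- For an ideal `I` and a linear functional `F : W →ₗ Λ`, the submodule `I • W` is mapped
into `I`; this is what lets `F` descend to `W/I·W →ₗ Λ/I`. -/
lemma mapQ_cond {Λ : Type} [CommRing Λ] {W : Type} [AddCommGroup W] [Module Λ W]
    (I : Ideal Λ) (F : W →ₗ[Λ] Λ) :
    (I • ⊤ : Submodule Λ W) ≤ Submodule.comap F I := by
  rw [Submodule.smul_le]
  intro r hr n _
  simp only [Submodule.mem_comap, map_smul, smul_eq_mul]
  exact I.mul_mem_right _ hr

namespace PowerSeries

open Finset

section CoeffDvdFiltration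

variable {R : Type*} [CommRing R] {π : R}

theorem pow_dvd_coeff_mul {N M : ℕ} {x y : R⟦X⟧} (hx : ∀ n, π ^ (N - n) ∣ coeff n x)
    (hy : ∀ n, π ^ (M - n) ∣ coeff n y) (n : ℕ) : π ^ (N + M - n) ∣ coeff n (x * y) := by
  rw [coeff_mul]
  refine Finset.dvd_sum fun ⟨i, j⟩ hij => ?_
  rw [HasAntidiagonal.mem_antidiagonal] at hij
  calc π ^ (N + M - n) ∣ π ^ (N - i + (M - j)) := pow_dvd_pow π (by omega)
    _ = π ^ (N - i) * π ^ (M - j) := pow_add π _ _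
    _ ∣ coeff i x * coeff j y := mul_dvd_mul (hx i) (hy j)

variable (π) in
/-- The filtration by the powers of the ideal `(π, X)`: the `n`-th coefficient of an element
of the `N`-th step is divisible by `π ^ (N - n)` (no condition once `n ≥ N`). -/
def coeffDvdFiltration (N : ℕ) : Ideal R⟦X⟧ where
  carrier := {x | ∀ n, π ^ (N - n) ∣ coeff n x}
  add_mem' hx hy n := by simpa only [map_add] using dvd_add (hx n) (hy n)
  zero_mem' n := by simp
  smul_mem' c x hx := by
    simpa using pow_dvd_coeff_mul (N := 0) (y := x) (fun _ => by simp) hx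

variable (π) in
theorem coeffDvdFiltration_zero : coeffDvdFiltration π 0 = ⊤ :=
  eq_top_iff.mpr fun x _ n => by simp

variable (π) in
theorem coeffDvdFiltration_antitone : Antitone (coeffDvdFiltration π) :=
  fun _ _ hNM _ hx n => (pow_dvd_pow π (by omega)).trans (hx n)

theorem mul_mem_coeffDvdFiltration {N M : ℕ} {x y : R⟦X⟧} (hx : x ∈ coeffDvdFiltration π N)
    (hy : y ∈ coeffDvdFiltration π M) : x * y ∈ coeffDvdFiltration π (N + M) :=
  pow_dvd_coeff_mul hx hy

theorem mem_coeffDvdFiltration_one_of_dvd {x : R⟦X⟧} (hx : π ∣ constantCoeff x) :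
    x ∈ coeffDvdFiltration π 1 := by
  rintro (_ | n)
  · simpa using hx
  · simp

end CoeffDvdFiltration

section OmegaSeries

variable (R : Type*) [CommRing R] (p : ℕ)

/-- Under `Λ ≅ ℤ_p⟦T⟧`, `γ ↦ 1 + T`, the ideal `𝔞_{k+2}` is generated by
`omegaSeries ℤ_[p] p k`. -/
noncomputable def omegaSeries (k : ℕ) : R⟦X⟧ :=
  (1 + X) ^ (p ^ k) - 1

theorem omegaSeries_zero : omegaSeries R p 0 = X := by
  simp [omegaSeries]

theorem omegaSeries_succ (k : ℕ) :
    omegaSeries R p (k + 1) = omegaSeries R p k * ∑ i ∈ range p, ((1 + X) ^ (p ^ k)) ^ i := by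
  rw [omegaSeries, omegaSeries, mul_comm, geom_sum_mul, pow_succ, pow_mul]

theorem exists_omegaSeries_add_eq_mul (k j : ℕ) :
    ∃ c ∈ coeffDvdFiltration (p : R) j, omegaSeries R p (k + j) = omegaSeries R p k * c := by
  induction j with
  | zero => exact ⟨1, by simp [coeffDvdFiltration_zero], by simp⟩
  | succ j ih =>
    obtain ⟨c, hc, hkj⟩ := ih
    have hν : ∑ i ∈ range p, ((1 + X) ^ (p ^ (k + j))) ^ i ∈ coeffDvdFiltration (p : R) 1 :=
      mem_coeffDvdFiltration_one_of_dvd (by simp)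
    exact ⟨c * _, mul_mem_coeffDvdFiltration hc hν,
      by rw [← add_assoc, omegaSeries_succ, hkj, mul_assoc]⟩

theorem omegaSeries_mem_coeffDvdFiltration (k : ℕ) :
    omegaSeries R p k ∈ coeffDvdFiltration (p : R) (k + 1) := by
  obtain ⟨c, hc, hk⟩ := exists_omegaSeries_add_eq_mul R p 0 k
  rw [zero_add, omegaSeries_zero] at hk
  rw [hk, add_comm]
  exact mul_mem_coeffDvdFiltration (mem_coeffDvdFiltration_one_of_dvd (by simp)) hc

end OmegaSeries

section PadicInt

open Filter Topology WithPiTopology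

variable {p : ℕ} [Fact p.Prime]

theorem _root_.PadicInt.tendsto_zero_of_pow_dvd {ι : Type*} {l : Filter ι} {x : ι → ℤ_[p]}
    {m : ι → ℕ} (hm : Tendsto m l atTop) (hx : ∀ i, (p : ℤ_[p]) ^ m i ∣ x i) :
    Tendsto x l (𝓝 0) := by
  have hp : Tendsto (fun n : ℕ => ‖(p : ℤ_[p])‖ ^ n) atTop (𝓝 0) :=
    tendsto_pow_atTop_nhds_zero_of_lt_one (norm_nonneg _)
      (PadicInt.norm_natCast_lt_one_iff.mpr dvd_rfl)
  refine squeeze_zero_norm (fun i => ?_) (hp.comp hm)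
  obtain ⟨c, hc⟩ := hx i
  rw [hc, norm_mul, norm_pow]
  exact mul_le_of_le_one_right (by positivity) (PadicInt.norm_le_one c)

theorem eq_zero_of_forall_mem_coeffDvdFiltration {x : ℤ_[p]⟦X⟧}
    (hx : ∀ N, x ∈ coeffDvdFiltration (p : ℤ_[p]) N) : x = 0 := by
  ext n
  have : Tendsto (fun _ : ℕ => coeff n x) atTop (𝓝 0) :=
    PadicInt.tendsto_zero_of_pow_dvd (tendsto_sub_atTop_nat n) fun N => hx N n
  simpa using tendsto_nhds_unique tendsto_const_nhds this

theorem summable_of_mem_coeffDvdFiltration {x : ℕ → ℤ_[p]⟦X⟧}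
    (hx : ∀ j, x j ∈ coeffDvdFiltration (p : ℤ_[p]) j) : Summable x := by
  refine (summable_iff_summable_coeff _).mpr fun n =>
    NonarchimedeanAddGroup.summable_of_tendsto_cofinite_zero ?_
  rw [Nat.cofinite_eq_atTop]
  exact PadicInt.tendsto_zero_of_pow_dvd (tendsto_sub_atTop_nat n) fun j => hx j n

theorem eq_zero_of_forall_omegaSeries_dvd {y : ℤ_[p]⟦X⟧} (hy : ∀ k, omegaSeries ℤ_[p] p k ∣ y) :
    y = 0 :=
  eq_zero_of_forall_mem_coeffDvdFiltration fun N => by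
    obtain ⟨c, rfl⟩ := hy N
    exact coeffDvdFiltration_antitone _ N.le_succ
      (Ideal.mul_mem_right c _ (omegaSeries_mem_coeffDvdFiltration ℤ_[p] p N))

theorem exists_forall_omegaSeries_dvd_sub (f : ℕ → ℤ_[p]⟦X⟧)
    (hf : ∀ k, omegaSeries ℤ_[p] p k ∣ f (k + 1) - f k) :
    ∃ F, ∀ k, omegaSeries ℤ_[p] p k ∣ F - f k := by
  choose h hh using hf
  have hmem : ∀ j, f (j + 1) - f j ∈ coeffDvdFiltration (p : ℤ_[p]) j := fun j => by
    rw [hh j]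
    exact coeffDvdFiltration_antitone _ j.le_succ
      (Ideal.mul_mem_right _ _ (omegaSeries_mem_coeffDvdFiltration ℤ_[p] p j))
  have hsum := summable_of_mem_coeffDvdFiltration hmem
  refine ⟨f 0 + ∑' j, (f (j + 1) - f j), fun k => ?_⟩
  choose c hc hωc using exists_omegaSeries_add_eq_mul ℤ_[p] p k
  have htail : ∀ j, f (j + k + 1) - f (j + k) = omegaSeries ℤ_[p] p k * (c j * h (j + k)) :=
    fun j => by rw [hh, add_comm j k, hωc, mul_assoc]
  have hcsum : Summable fun j => c j * h (j + k) :=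
    summable_of_mem_coeffDvdFiltration fun j => Ideal.mul_mem_right _ _ (hc j)
  refine ⟨∑' j, c j * h (j + k), ?_⟩
  rw [← hcsum.tsum_mul_left, ← tsum_congr htail, ← hsum.sum_add_tsum_nat_add k,
    Finset.sum_range_sub (f := f)]
  abel

end PadicInt

end PowerSeries

section InverseLimit

variable {Λ : Type} [CommRing Λ] (I : ℕ → Ideal Λ) (r₀ : ℕ)

/-- `IsSeparatedAlong I r₀` and `IsCompleteAlong I r₀` say that the map from `Λ` to the
inverse limit of the `Λ ⧸ I r`, `r ≥ r₀`, is injective, resp. surjective. -/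
def IsSeparatedAlong : Prop :=
  ∀ y : Λ, (∀ r, r₀ ≤ r → y ∈ I r) → y = 0

def IsCompleteAlong : Prop :=
  ∀ f : ℕ → Λ, (∀ r s, r₀ ≤ s → s ≤ r → f r - f s ∈ I s) → ∃ y, ∀ r, r₀ ≤ r → y - f r ∈ I r

variable {I r₀}

theorem IsSeparatedAlong.eq_of_forall_mkQ_eq (hI : IsSeparatedAlong I r₀) {y y' : Λ}
    (h : ∀ r, r₀ ≤ r →
      Submodule.mkQ (I r : Submodule Λ Λ) y = Submodule.mkQ (I r : Submodule Λ Λ) y') :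
    y = y' :=
  sub_eq_zero.mp <| hI _ fun r hr => (Submodule.Quotient.eq _).mp (h r hr)

theorem IsCompleteAlong.exists_mkQ_eq (hI : IsCompleteAlong I r₀)
    (ρ : ∀ r s, s ≤ r → ((Λ ⧸ I r) →ₗ[Λ] (Λ ⧸ I s)))
    (hρ : ∀ r s (h : s ≤ r) (x : Λ),
      ρ r s h (Submodule.mkQ (I r : Submodule Λ Λ) x) = Submodule.mkQ (I s : Submodule Λ Λ) x)
    (x : ∀ r, Λ ⧸ I r) (hx : ∀ r s (h : s ≤ r), r₀ ≤ s → ρ r s h (x r) = x s) :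
    ∃ y : Λ, ∀ r, r₀ ≤ r → Submodule.mkQ (I r : Submodule Λ Λ) y = x r := by
  choose f hf using fun r => Submodule.mkQ_surjective (I r : Submodule Λ Λ) (x r)
  obtain ⟨y, hy⟩ := hI f fun r s hs hsr => (Submodule.Quotient.eq _).mp <| by
    rw [← Submodule.mkQ_apply, ← Submodule.mkQ_apply, ← hρ r s hsr, hf, hf, hx r s hsr hs]
  exact ⟨y, fun r hr => by rw [← hf r, Submodule.mkQ_apply, Submodule.mkQ_apply,
    Submodule.Quotient.eq]; exact hy r hr⟩

variable {W : Type} [AddCommGroup W] [Module Λ W]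

theorem IsSeparatedAlong.eq_of_forall_mapQ_eq (hI : IsSeparatedAlong I r₀) (F F' : W →ₗ[Λ] Λ)
    (h : ∀ r, r₀ ≤ r →
      Submodule.mapQ (I r • ⊤ : Submodule Λ W) (I r) F (mapQ_cond (I r) F)
        = Submodule.mapQ (I r • ⊤ : Submodule Λ W) (I r) F' (mapQ_cond (I r) F')) :
    F = F' :=
  LinearMap.ext fun w => hI.eq_of_forall_mkQ_eq fun r hr => by
    simpa using LinearMap.congr_fun (h r hr) (Submodule.Quotient.mk w)

theorem IsCompleteAlong.exists_mapQ_eq (hsep : IsSeparatedAlong I r₀)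
    (hcomp : IsCompleteAlong I r₀)
    (ρW : ∀ r s, s ≤ r →
      ((W ⧸ (I r • ⊤ : Submodule Λ W)) →ₗ[Λ] (W ⧸ (I s • ⊤ : Submodule Λ W))))
    (hρW : ∀ r s (h : s ≤ r) (w : W),
      ρW r s h (Submodule.mkQ (I r • ⊤ : Submodule Λ W) w) = Submodule.mkQ (I s • ⊤) w)
    (ρΛ : ∀ r s, s ≤ r → ((Λ ⧸ I r) →ₗ[Λ] (Λ ⧸ I s)))
    (hρΛ : ∀ r s (h : s ≤ r) (x : Λ),
      ρΛ r s h (Submodule.mkQ (I r : Submodule Λ Λ) x) = Submodule.mkQ (I s : Submodule Λ Λ) x)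
    (g : ∀ r, (W ⧸ (I r • ⊤ : Submodule Λ W)) →ₗ[Λ] (Λ ⧸ I r))
    (hg : ∀ r s (h : s ≤ r), r₀ ≤ s → (ρΛ r s h).comp (g r) = (g s).comp (ρW r s h)) :
    ∃ F : W →ₗ[Λ] Λ, ∀ r, r₀ ≤ r →
      Submodule.mapQ (I r • ⊤ : Submodule Λ W) (I r) F (mapQ_cond (I r) F) = g r := by
  choose F hF using fun w => hcomp.exists_mkQ_eq ρΛ hρΛ (fun r => g r (Submodule.mkQ _ w))
    fun r s h hs => by rw [← LinearMap.comp_apply, hg r s h hs, LinearMap.comp_apply, hρW]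
  let Flin : W →ₗ[Λ] Λ :=
    { toFun := F
      map_add' w w' := hsep.eq_of_forall_mkQ_eq fun r hr => by simp only [map_add, hF _ r hr]
      map_smul' c w := hsep.eq_of_forall_mkQ_eq fun r hr => by
        simp only [map_smul, hF _ r hr, RingHom.id_apply] }
  exact ⟨Flin, fun r hr => Submodule.linearMap_qext _ <| LinearMap.ext fun w => hF w r hr⟩

end InverseLimit

section AugmentationIdeals

open PowerSeries

variable {p : ℕ} [Fact p.Prime]

theorem isSeparatedAlong_span_omegaSeries (r₀ : ℕ) :
    IsSeparatedAlong (fun r => Ideal.span {omegaSeries ℤ_[p] p (r - r₀)}) r₀ := fun _ hy =>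
  eq_zero_of_forall_omegaSeries_dvd fun k => Ideal.mem_span_singleton.mp <| by
    simpa using hy (k + r₀) (by omega)

theorem isCompleteAlong_span_omegaSeries (r₀ : ℕ) :
    IsCompleteAlong (fun r => Ideal.span {omegaSeries ℤ_[p] p (r - r₀)}) r₀ := by
  intro f hf
  obtain ⟨F, hF⟩ := exists_forall_omegaSeries_dvd_sub (fun k => f (k + r₀)) fun k => by
    simpa [Ideal.mem_span_singleton, add_right_comm k 1 r₀] using
      hf (k + r₀ + 1) (k + r₀) (by omega) (by omega)
  refine ⟨F, fun r hr => ?_⟩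
  obtain ⟨k, rfl⟩ := Nat.exists_eq_add_of_le' hr
  simpa [Ideal.mem_span_singleton] using hF k

end AugmentationIdeals

theorem stmt18_general (p : ℕ) [Fact p.Prime]
    (a : ℕ → Ideal (PowerSeries ℤ_[p]))
    (ha : ∀ r, a r =
      Ideal.span {(1 + PowerSeries.X : PowerSeries ℤ_[p]) ^ (p ^ (r - 2)) - 1})
    (W : Type) [AddCommGroup W] [Module (PowerSeries ℤ_[p]) W]
    -- transition maps of the inverse system {W/𝔞_r W}
    (ρW : ∀ r s, s ≤ r →
      ((W ⧸ (a r • ⊤ : Submodule (PowerSeries ℤ_[p]) W)) →ₗ[PowerSeries ℤ_[p]]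
        (W ⧸ (a s • ⊤ : Submodule (PowerSeries ℤ_[p]) W))))
    (hρW : ∀ r s (h : s ≤ r) (w : W),
      ρW r s h (Submodule.mkQ (a r • ⊤ : Submodule (PowerSeries ℤ_[p]) W) w)
        = Submodule.mkQ (a s • ⊤ : Submodule (PowerSeries ℤ_[p]) W) w)
    -- transition maps of the inverse system {Λ_r = Λ/𝔞_r}
    (ρΛ : ∀ r s, s ≤ r →
      ((PowerSeries ℤ_[p] ⧸ a r) →ₗ[PowerSeries ℤ_[p]] (PowerSeries ℤ_[p] ⧸ a s)))
    (hρΛ : ∀ r s (h : s ≤ r) (x : PowerSeries ℤ_[p]),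
      ρΛ r s h (Submodule.mkQ (a r : Submodule (PowerSeries ℤ_[p]) (PowerSeries ℤ_[p])) x)
        = Submodule.mkQ (a s : Submodule (PowerSeries ℤ_[p]) (PowerSeries ℤ_[p])) x) :
    -- conclusion: Hom_Λ(W,Λ) ≅ lim←_r Hom_{Λ_r}(W/𝔞_r W, Λ_r) via the reduction maps
    (∀ F F' : W →ₗ[PowerSeries ℤ_[p]] PowerSeries ℤ_[p],
      (∀ r, 2 ≤ r →
        Submodule.mapQ (a r • ⊤ : Submodule (PowerSeries ℤ_[p]) W) (a r) F (mapQ_cond (a r) F)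
          = Submodule.mapQ (a r • ⊤ : Submodule (PowerSeries ℤ_[p]) W) (a r) F'
              (mapQ_cond (a r) F')) → F = F') ∧
    (∀ g : ∀ r, (W ⧸ (a r • ⊤ : Submodule (PowerSeries ℤ_[p]) W)) →ₗ[PowerSeries ℤ_[p]]
        (PowerSeries ℤ_[p] ⧸ a r),
      (∀ r s (h : s ≤ r), 2 ≤ s → (ρΛ r s h).comp (g r) = (g s).comp (ρW r s h)) →
      ∃ F : W →ₗ[PowerSeries ℤ_[p]] PowerSeries ℤ_[p], ∀ r, 2 ≤ r →
        Submodule.mapQ (a r • ⊤ : Submodule (PowerSeries ℤ_[p]) W) (a r) F (mapQ_cond (a r) F)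
          = g r) := by
  obtain rfl : a = fun r => Ideal.span {PowerSeries.omegaSeries ℤ_[p] p (r - 2)} := funext ha
  have hsep := isSeparatedAlong_span_omegaSeries (p := p) 2
  exact ⟨hsep.eq_of_forall_mapQ_eq,
    (isCompleteAlong_span_omegaSeries 2).exists_mapQ_eq hsep ρW hρW ρΛ hρΛ⟩

theorem stmt18 (p : ℕ) [Fact p.Prime]
    (a : ℕ → Ideal (PowerSeries ℤ_[p]))
    (ha : ∀ r, a r =
      Ideal.span {(1 + PowerSeries.X : PowerSeries ℤ_[p]) ^ (p ^ (r - 2)) - 1})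
    (W : Type) [AddCommGroup W] [Module (PowerSeries ℤ_[p]) W]
    -- transition maps of the inverse system {W/𝔞_r W}
    (ρW : ∀ r s, s ≤ r →
      ((W ⧸ (a r • ⊤ : Submodule (PowerSeries ℤ_[p]) W)) →ₗ[PowerSeries ℤ_[p]]
        (W ⧸ (a s • ⊤ : Submodule (PowerSeries ℤ_[p]) W))))
    (hρW : ∀ r s (h : s ≤ r) (w : W),
      ρW r s h (Submodule.mkQ (a r • ⊤ : Submodule (PowerSeries ℤ_[p]) W) w)
        = Submodule.mkQ (a s • ⊤ : Submodule (PowerSeries ℤ_[p]) W) w)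
    -- transition maps of the inverse system {Λ_r = Λ/𝔞_r}
    (ρΛ : ∀ r s, s ≤ r →
      ((PowerSeries ℤ_[p] ⧸ a r) →ₗ[PowerSeries ℤ_[p]] (PowerSeries ℤ_[p] ⧸ a s)))
    (hρΛ : ∀ r s (h : s ≤ r) (x : PowerSeries ℤ_[p]),
      ρΛ r s h (Submodule.mkQ (a r : Submodule (PowerSeries ℤ_[p]) (PowerSeries ℤ_[p])) x)
        = Submodule.mkQ (a s : Submodule (PowerSeries ℤ_[p]) (PowerSeries ℤ_[p])) x)
    -- W = lim←_r W/𝔞_r W :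
    (hWinj : Function.Injective
      (fun w : W => fun r => Submodule.mkQ (a r • ⊤ : Submodule (PowerSeries ℤ_[p]) W) w))
    (hWsurj : ∀ g : ∀ r, W ⧸ (a r • ⊤ : Submodule (PowerSeries ℤ_[p]) W),
      (∀ r s (h : s ≤ r), 2 ≤ s → ρW r s h (g r) = g s) →
      ∃ w : W, ∀ r, 2 ≤ r →
        Submodule.mkQ (a r • ⊤ : Submodule (PowerSeries ℤ_[p]) W) w = g r) :
    -- conclusion: Hom_Λ(W,Λ) ≅ lim←_r Hom_{Λ_r}(W/𝔞_r W, Λ_r) via the reduction maps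
    (∀ F F' : W →ₗ[PowerSeries ℤ_[p]] PowerSeries ℤ_[p],
      (∀ r, 2 ≤ r →
        Submodule.mapQ (a r • ⊤ : Submodule (PowerSeries ℤ_[p]) W) (a r) F (mapQ_cond (a r) F)
          = Submodule.mapQ (a r • ⊤ : Submodule (PowerSeries ℤ_[p]) W) (a r) F'
              (mapQ_cond (a r) F')) → F = F') ∧
    (∀ g : ∀ r, (W ⧸ (a r • ⊤ : Submodule (PowerSeries ℤ_[p]) W)) →ₗ[PowerSeries ℤ_[p]]
        (PowerSeries ℤ_[p] ⧸ a r),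
      (∀ r s (h : s ≤ r), 2 ≤ s → (ρΛ r s h).comp (g r) = (g s).comp (ρW r s h)) →
      ∃ F : W →ₗ[PowerSeries ℤ_[p]] PowerSeries ℤ_[p], ∀ r, 2 ≤ r →
        Submodule.mapQ (a r • ⊤ : Submodule (PowerSeries ℤ_[p]) W) (a r) F (mapQ_cond (a r) F)
          = g r) :=
  stmt18_general p a ha W ρW hρW ρΛ hρΛ
end
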